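/- arXiv:gr-qc/0507062 — 2 statements merged into one kernel-verified Lean document; each statement's English description precedes it below -/
import Mathlib

section
/- The determinant of the matrix Φ equals 1 (so that Φ, being Hermitian with Φ * η * Φ = η and det Φ = 1, lies in SU(2,1)). -/
open Complex ComplexConjugate Matrix

/-- The `SU(2,1)` metric `η = diag(-1, 1, 1)`. -/
noncomputable def etaM : Matrix (Fin 3) (Fin 3) ℂ :=
  Matrix.diagonal ![-1, 1, 1]

/-- The vector `v` built from the Ernst potential `ℰ = -X - Λ conj(Λ) + i Y`
and the electromagnetic potential `Λ`:
`v = (2√X)⁻¹ (ℰ - 1, 2Λ, ℰ + 1)`. -/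
noncomputable def vE (X Y : ℝ) (Λ : ℂ) : Fin 3 → ℂ :=
  let ℰ : ℂ := -(X : ℂ) - Λ * conj Λ + Complex.I * Y
  ![(ℰ - 1) / (2 * Real.sqrt X), Λ / Real.sqrt X, (ℰ + 1) / (2 * Real.sqrt X)]

/-- The hermitian matrix `Φ` of the Mazur construction:
`Φ_{ab} = η_{ab} + 2 conj(v_a) v_b`. -/
noncomputable def PhiM (X Y : ℝ) (Λ : ℂ) : Matrix (Fin 3) (Fin 3) ℂ :=
  Matrix.of fun a b => etaM a b + 2 * conj (vE X Y Λ a) * vE X Y Λ b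


/-! `Φ = η + 2 v̄ vᵀ` is a rank-one perturbation of `η = η⁻¹`, so the matrix determinant lemma
gives `det Φ = det η · (1 + 2 vᵀ η v̄) = -(1 + 2 ⟨v, v⟩_η)`. The `η`-norm of `v` is `-1`:
`|ℰ + 1|² - |ℰ - 1|² = 4 Re ℰ = -4 (X + |Λ|²)`, so
`⟨v, v⟩_η = (|ℰ + 1|² - |ℰ - 1|² + 4 |Λ|²) / (4X) = -1`. -/

theorem Matrix.det_add_vecMulVec {n R : Type*} [Fintype n] [DecidableEq n] [CommRing R]
    {A : Matrix n n R} (hA : IsUnit A.det) (u w : n → R) :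
    (A + vecMulVec u w).det = A.det * (1 + w ⬝ᵥ A⁻¹ *ᵥ u) := by
  rw [vecMulVec_eq Unit, det_add_replicateCol_mul_replicateRow hA, det_unique (n := Unit),
    Matrix.mul_assoc, ← replicateCol_mulVec, add_apply, one_apply_eq,
    replicateRow_mul_replicateCol_apply]

theorem det_etaM : etaM.det = -1 := by
  simp [etaM, Fin.prod_univ_three]

theorem inv_etaM : etaM⁻¹ = etaM :=
  inv_eq_left_inv <| by
    rw [etaM, diagonal_mul_diagonal, ← diagonal_one]
    congr 1
    ext i
    fin_cases i <;> simp

theorem PhiM_eq_etaM_add_vecMulVec (X Y : ℝ) (Λ : ℂ) :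
    PhiM X Y Λ = etaM + vecMulVec (2 • star (vE X Y Λ)) (vE X Y Λ) := by
  ext a b
  simp [PhiM, vecMulVec_apply, mul_assoc]

theorem vE_dotProduct_etaM_mulVec_star (X Y : ℝ) (hX : 0 < X) (Λ : ℂ) :
    vE X Y Λ ⬝ᵥ etaM *ᵥ star (vE X Y Λ) = -1 := by
  have hs : (Real.sqrt X : ℂ) ^ 2 = X := by
    rw [← Complex.ofReal_pow, Real.sq_sqrt hX.le]
  have hs0 : (Real.sqrt X : ℂ) ≠ 0 := by
    simp [Real.sqrt_eq_zero', not_le.mpr hX]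
  simp only [dotProduct, vE, etaM, mulVec_diagonal, Pi.star_apply, RCLike.star_def,
    Fin.sum_univ_three, Fin.isValue, cons_val_zero, cons_val_one, cons_val, map_div₀, map_sub,
    map_add, map_neg, map_mul, map_one, map_ofNat, conj_ofReal, conj_I,
    RingHomCompTriple.comp_apply, RingHom.id_apply, neg_mul, one_mul, mul_neg]
  field_simp
  rw [hs]
  ring

/-- The determinant of `Φ` equals `1` (so `Φ`, being Hermitian with
`Φ η Φ = η` and `det Φ = 1`, lies in `SU(2,1)`). -/
theorem PhiM_det_one (X Y : ℝ) (hX : 0 < X) (Λ : ℂ) :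
    (PhiM X Y Λ).det = 1 := by
  have hη : IsUnit etaM.det := by
    rw [det_etaM]
    exact isUnit_one.neg
  rw [PhiM_eq_etaM_add_vecMulVec, det_add_vecMulVec hη, det_etaM, inv_etaM, mulVec_smul,
    dotProduct_smul, vE_dotProduct_etaM_mulVec_star X Y hX]
  norm_num
end

section
/- Trace formula for the Mazur quantity: for two data sets (X₁, Y₁, Λ₁) and (X₂, Y₂, Λ₂) with X₁ > 0 and X₂ > 0, writing Φ₁ := Φ(X₁,Y₁,Λ₁) and Φ₂ := Φ(X₂,Y₂,Λ₂), one has the equality of complex numbers trace(Φ₁ * Φ₂⁻¹) - 3 = (1/(X₁*X₂)) * ( (X₁－X₂)^2 + 2*(X₁＋X₂)*Complex.normSq(Λ₁－Λ₂) + (Complex.normSq(Λ₁－Λ₂))^2 + ( (Y₁－Y₂) + Complex.im((Λ₁－Λ₂)*conj(Λ₁＋Λ₂)) )^2 ), where the right-hand side is a real number coerced to ℂ (here Φ₂⁻¹ is the matrix inverse, which equals η * Φ₂ * η). -/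
open Complex ComplexConjugate Matrix

/-!
Write `Φ = η + 2 u u†` with `u = conj v`. Since `η² = 1` and `⟨v, v⟩_η = -1`, the matrix `Φ η` is an
involution, so `Φ⁻¹ = η Φ η`. Expanding `tr (Φ₁ η Φ₂ η)` then gives `3 - 4 + 4 |⟨v₁, v₂⟩_η|²`, where
`⟨v₁, v₂⟩_η = (ℰ₁ + conj ℰ₂ + 2 Λ₁ conj Λ₂) / (2 √(X₁ X₂))` has real part
`-(X₁ + X₂ + |Λ₁ - Λ₂|²) / (2 √(X₁ X₂))`; the `-4` turns the square of `X₁ + X₂` into `(X₁ - X₂)²`.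
-/
namespace Matrix

variable {n R : Type*} [Fintype n] [CommRing R]

theorem trace_vecMulVec_mul (u w : n → R) (M : Matrix n n R) :
    trace (vecMulVec u w * M) = w ⬝ᵥ (M *ᵥ u) := by
  rw [vecMulVec_mul, trace_vecMulVec, dotProduct_comm, dotProduct_mulVec]

theorem vecMulVec_mul_mul_vecMulVec (u w u' w' : n → R) (M : Matrix n n R) :
    vecMulVec u w * M * vecMulVec u' w' = (w ⬝ᵥ (M *ᵥ u')) • vecMulVec u w' := by
  rw [vecMulVec_mul, vecMulVec_mul_vecMulVec, ← dotProduct_mulVec, vecMulVec_smul]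

variable [DecidableEq n] {η : Matrix n n R}

theorem add_two_smul_vecMulVec_mul_mul_self (hη : η * η = 1) {u w : n → R}
    (huw : w ⬝ᵥ (η *ᵥ u) = -1) :
    (η + 2 • vecMulVec u w) * η * (η + 2 • vecMulVec u w) = η := by
  have hA := vecMulVec_mul_mul_vecMulVec u w u w η
  rw [huw, neg_one_smul] at hA
  have hηA : η * η * vecMulVec u w = vecMulVec u w := by rw [hη, one_mul]
  have hηηη : η * η * η = η := by rw [hη, one_mul]
  have hAη : vecMulVec u w * η * η = vecMulVec u w := by rw [mul_assoc, hη, mul_one]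
  simp only [add_mul, mul_add, smul_mul, Matrix.mul_smul, smul_smul, hA, hηηη, hηA, hAη]
  module

theorem inv_add_two_smul_vecMulVec (hη : η * η = 1) {u w : n → R}
    (huw : w ⬝ᵥ (η *ᵥ u) = -1) :
    (η + 2 • vecMulVec u w)⁻¹ = η * (η + 2 • vecMulVec u w) * η :=
  inv_eq_right_inv <| by
    rw [← mul_assoc, ← mul_assoc, add_two_smul_vecMulVec_mul_mul_self hη huw, hη]

theorem trace_add_two_smul_vecMulVec_mul_inv (hη : η * η = 1) {u₁ w₁ u₂ w₂ : n → R}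
    (hu₁ : w₁ ⬝ᵥ (η *ᵥ u₁) = -1) (hu₂ : w₂ ⬝ᵥ (η *ᵥ u₂) = -1) :
    trace ((η + 2 • vecMulVec u₁ w₁) * (η + 2 • vecMulVec u₂ w₂)⁻¹) =
      Fintype.card n - 4 + 4 * ((w₁ ⬝ᵥ (η *ᵥ u₂)) * (w₂ ⬝ᵥ (η *ᵥ u₁))) := by
  have hΦη : ∀ u w : n → R, (η + 2 • vecMulVec u w) * η = 1 + 2 • (vecMulVec u w * η) := by
    intro u w; rw [add_mul, hη, smul_mul]
  rw [inv_add_two_smul_vecMulVec hη hu₂, ← mul_assoc, ← mul_assoc, hΦη, mul_assoc _ _ η, hΦη]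
  simp only [add_mul, mul_add, one_mul, mul_one, smul_mul, Matrix.mul_smul, smul_smul,
    ← mul_assoc, vecMulVec_mul_mul_vecMulVec, trace_add, trace_smul, trace_one,
    trace_vecMulVec_mul, hu₁, hu₂, smul_eq_mul]
  ring

end Matrix

noncomputable def ernst (X Y : ℝ) (Λ : ℂ) : ℂ := -(X : ℂ) - Λ * conj Λ + I * Y

theorem vE_eq_ernst (X Y : ℝ) (Λ : ℂ) :
    vE X Y Λ = ![(ernst X Y Λ - 1) / (2 * √X), Λ / √X, (ernst X Y Λ + 1) / (2 * √X)] :=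
  rfl

theorem etaM_mul_self : etaM * etaM = 1 := by
  rw [etaM, diagonal_mul_diagonal, ← diagonal_one]
  congr 1
  ext i
  fin_cases i <;> norm_num

theorem PhiM_eq_etaM_add_two_smul_vecMulVec (X Y : ℝ) (Λ : ℂ) :
    PhiM X Y Λ = etaM + 2 • vecMulVec (star (vE X Y Λ)) (vE X Y Λ) := by
  ext a b
  simp only [PhiM, of_apply, Matrix.add_apply, two_smul, vecMulVec_apply, Pi.star_apply,
    RCLike.star_def]
  ring

theorem vE_dotProduct_etaM_mulVec_star_s10 (X₁ Y₁ X₂ Y₂ : ℝ) (Λ₁ Λ₂ : ℂ) :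
    vE X₁ Y₁ Λ₁ ⬝ᵥ (etaM *ᵥ star (vE X₂ Y₂ Λ₂)) =
      (ernst X₁ Y₁ Λ₁ + conj (ernst X₂ Y₂ Λ₂) + 2 * Λ₁ * conj Λ₂) / (2 * √X₁ * √X₂) := by
  simp only [vE_eq_ernst, etaM, mulVec_diagonal, dotProduct, Fin.sum_univ_three, Pi.star_apply,
    RCLike.star_def, Matrix.cons_val_zero, Matrix.cons_val_one, Matrix.cons_val_two, map_div₀,
    map_add, map_sub, map_mul, map_one, map_ofNat, conj_ofReal, Matrix.head_cons, Matrix.tail_cons]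
  ring

theorem vE_dotProduct_etaM_mulVec_star_self {X : ℝ} (hX : 0 < X) (Y : ℝ) (Λ : ℂ) :
    vE X Y Λ ⬝ᵥ (etaM *ᵥ star (vE X Y Λ)) = -1 := by
  have hX0 : (X : ℂ) ≠ 0 := ofReal_ne_zero.2 hX.ne'
  have hsq : (√X : ℂ) * √X = X := by exact_mod_cast Real.mul_self_sqrt hX.le
  rw [vE_dotProduct_etaM_mulVec_star_s10, mul_assoc (2 : ℂ) (√X : ℂ), hsq]
  field_simp
  simp only [ernst, map_add, map_sub, map_neg, map_mul, conj_ofReal, conj_conj, conj_I]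
  ring

theorem normSq_ernst_add_conj_ernst (X₁ Y₁ X₂ Y₂ : ℝ) (Λ₁ Λ₂ : ℂ) :
    normSq (ernst X₁ Y₁ Λ₁ + conj (ernst X₂ Y₂ Λ₂) + 2 * Λ₁ * conj Λ₂) =
      (X₁ + X₂ + normSq (Λ₁ - Λ₂)) ^ 2 + (Y₁ - Y₂ + ((Λ₁ - Λ₂) * conj (Λ₁ + Λ₂)).im) ^ 2 := by
  simp only [ernst, normSq_apply, map_add, map_sub, map_neg, map_mul, conj_ofReal, conj_I,
    add_re, sub_re, neg_re, mul_re, conj_re, conj_im, I_re, I_im, ofReal_re, ofReal_im, re_ofNat,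
    im_ofNat, add_im, sub_im, neg_im, mul_im]
  ring

theorem vE_dotProduct_etaM_mulVec_star_mul_swap {X₁ X₂ : ℝ} (hX₁ : 0 ≤ X₁) (hX₂ : 0 ≤ X₂)
    (Y₁ Y₂ : ℝ) (Λ₁ Λ₂ : ℂ) :
    vE X₁ Y₁ Λ₁ ⬝ᵥ (etaM *ᵥ star (vE X₂ Y₂ Λ₂)) * vE X₂ Y₂ Λ₂ ⬝ᵥ (etaM *ᵥ star (vE X₁ Y₁ Λ₁)) =
      ((normSq (ernst X₁ Y₁ Λ₁ + conj (ernst X₂ Y₂ Λ₂) + 2 * Λ₁ * conj Λ₂) / (4 * (X₁ * X₂)) : ℝ) :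
        ℂ) := by
  have hsq : ∀ {X : ℝ}, 0 ≤ X → (X : ℂ) = √X * √X := fun hX => by
    exact_mod_cast (Real.mul_self_sqrt hX).symm
  rw [vE_dotProduct_etaM_mulVec_star_s10, vE_dotProduct_etaM_mulVec_star_s10, div_mul_div_comm, ofReal_div,
    ← mul_conj]
  push_cast
  rw [hsq hX₁, hsq hX₂]
  simp only [map_add, map_mul, conj_conj, map_ofNat]
  ring

/-- Trace formula for the Mazur quantity:
`tr(Φ₁ Φ₂⁻¹) - 3 = (X₁X₂)⁻¹ [ (X₁-X₂)² + 2(X₁+X₂)|Λ₁-Λ₂|² + |Λ₁-Λ₂|⁴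
  + ( (Y₁-Y₂) + Im((Λ₁-Λ₂) conj(Λ₁+Λ₂)) )² ]`. -/
theorem PhiM_trace_formula (X₁ Y₁ X₂ Y₂ : ℝ) (Λ₁ Λ₂ : ℂ)
    (hX₁ : 0 < X₁) (hX₂ : 0 < X₂) :
    (PhiM X₁ Y₁ Λ₁ * (PhiM X₂ Y₂ Λ₂)⁻¹).trace - 3 =
      (((1 / (X₁ * X₂)) *
        ((X₁ - X₂) ^ 2 + 2 * (X₁ + X₂) * Complex.normSq (Λ₁ - Λ₂)
          + (Complex.normSq (Λ₁ - Λ₂)) ^ 2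
          + ((Y₁ - Y₂) + ((Λ₁ - Λ₂) * conj (Λ₁ + Λ₂)).im) ^ 2) : ℝ) : ℂ) := by
  rw [PhiM_eq_etaM_add_two_smul_vecMulVec, PhiM_eq_etaM_add_two_smul_vecMulVec,
    trace_add_two_smul_vecMulVec_mul_inv etaM_mul_self (vE_dotProduct_etaM_mulVec_star_self hX₁ _ _)
      (vE_dotProduct_etaM_mulVec_star_self hX₂ _ _),
    vE_dotProduct_etaM_mulVec_star_mul_swap hX₁.le hX₂.le, Fintype.card_fin]
  have hX₁0 : (X₁ : ℂ) ≠ 0 := ofReal_ne_zero.2 hX₁.ne'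
  have hX₂0 : (X₂ : ℂ) ≠ 0 := ofReal_ne_zero.2 hX₂.ne'
  rw [normSq_ernst_add_conj_ernst]
  push_cast
  field_simp
  ring
end
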